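/- arXiv:1602.06726 — 7 statements merged into one kernel-verified Lean document; each statement's English description precedes it below -/
import Mathlib

section
/- If a + b is odd, gcd(a,b) = 1, and a² + 3b² = c³ for some positive integer c, then a + b√−3 is a cube in ℤ[√−3], i.e., a + b√−3 = (e + f√−3)³ for some integers e, f. -/
/-!
Work in the Eisenstein integers `𝓞 K`, `K = ℚ(ζ₃)`: a principal ideal domain with units
`±1, ±η, ±η²`, into which `ℤ√-3` embeds by `√-3 ↦ 2η + 1`. As `a + b` is odd and `a, b` are
coprime, `c` is prime to `6`, and this already makes `a + b√-3` and its conjugate coprime in `ℤ√-3`.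
Their product is `c³`, so `a + b√-3 = u δ³` in `𝓞 K` with `u` a unit. Modulo `2` (`𝓞 K / 2` is the
field with four elements) `a + b√-3 ≡ 1` while every cube is `0` or `1`, which forces `u = ±1`.
Finally one of `γ, ηγ, η²γ` lies in `ℤ√-3`, and all three have the same cube.
-/

open NumberField

theorem Zsqrtd.isCoprime_self_star {d : ℤ} {z : ℤ√d} (hz : IsCoprime z.re z.im)
    (hnorm : IsCoprime (2 * d) z.norm) : IsCoprime z (star z) := by
  obtain ⟨p, q, hpq⟩ := hz
  obtain ⟨u, v, huv⟩ := hnorm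
  have hpq' : (p : ℤ√d) * z.re + q * z.im = 1 := by
    exact_mod_cast congrArg (Int.cast : ℤ → ℤ√d) hpq
  have huv' : (u : ℤ√d) * (2 * d) + v * (z * star z) = 1 := by
    rw [← norm_eq_mul_conj]; exact_mod_cast congrArg (Int.cast : ℤ → ℤ√d) huv
  have hre : z + star z = 2 * (z.re : ℤ√d) := by ext <;> simp; ring
  have him : sqrtd * (z - star z) = 2 * (d : ℤ√d) * (z.im : ℤ√d) := by ext <;> simp; ring
  refine ⟨(u : ℤ√d) * (d * p + q * (sqrtd : ℤ√d)) + v * star z,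
    (u : ℤ√d) * (d * p - q * (sqrtd : ℤ√d)), ?_⟩
  linear_combination huv' + 2 * (d : ℤ√d) * u * hpq' + (u : ℤ√d) * d * p * hre +
    (u : ℤ√d) * q * him

theorem isCoprime_six_of_sq_add_three_mul_sq_eq_cube {a b c : ℤ} (hab : IsCoprime a b)
    (hodd : Odd (a + b)) (h : a ^ 2 + 3 * b ^ 2 = c ^ 3) : IsCoprime 6 (a ^ 2 + 3 * b ^ 2) := by
  have h2 : IsCoprime 2 (a ^ 2 + 3 * b ^ 2) := by
    rw [Int.prime_two.coprime_iff_not_dvd, ← even_iff_two_dvd, Int.not_even_iff_odd]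
    have : a ^ 2 + 3 * b ^ 2 = (a + b) ^ 2 + 2 * (b ^ 2 - a * b) := by ring
    exact this ▸ hodd.pow.add_even (even_two_mul _)
  have h3 : IsCoprime 3 (c ^ 3) := by
    refine IsCoprime.pow_right (Int.prime_three.coprime_iff_not_dvd.2 ?_)
    rintro ⟨k, rfl⟩
    obtain ⟨m, rfl⟩ : (3 : ℤ) ∣ a :=
      Int.prime_three.dvd_of_dvd_pow (n := 2) ⟨9 * k ^ 3 - b ^ 2, by linear_combination h⟩
    have h3b : (3 : ℤ) ∣ b :=
      Int.prime_three.dvd_of_dvd_pow (n := 2) ⟨3 * k ^ 3 - m ^ 2, by linarith⟩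
    have := hab.isUnit_of_dvd' (dvd_mul_right 3 m) h3b
    norm_num [Int.isUnit_iff] at this
  rw [h] at h2 ⊢
  exact h3.mul_left h2

namespace IsCyclotomicExtension.Rat.Three

variable {K : Type*} [Field K] {ζ : K} (hζ : IsPrimitiveRoot ζ 3)

local notation "η" => hζ.toInteger

def toEisenstein : ℤ√(-3) →+* 𝓞 K :=
  Zsqrtd.lift ⟨2 * η + 1, by
    have hη : η ^ 2 + η + 1 = 0 := eta_sq_add_eta_add_one hζ
    push_cast
    linear_combination 4 * hη⟩

theorem toEisenstein_apply (z : ℤ√(-3)) :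
    toEisenstein hζ z = ((z.re + z.im : ℤ) : 𝓞 K) + ((2 * z.im : ℤ) : 𝓞 K) * η := by
  simp [toEisenstein]
  ring

theorem two_dvd_toEisenstein_sub_one {z : ℤ√(-3)} (hz : Odd (z.re + z.im)) :
    2 ∣ toEisenstein hζ z - 1 := by
  obtain ⟨k, hk⟩ := hz
  exact ⟨k + z.im * η, by rw [toEisenstein_apply]; push_cast [hk]; ring⟩

theorem exists_toEisenstein_eq_of_even (x : ℤ) {y : ℤ} (hy : Even y) :
    ∃ w, toEisenstein hζ w = x + y * η := by
  obtain ⟨n, rfl⟩ := hy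
  exact ⟨⟨x - n, n⟩, by rw [toEisenstein_apply]; push_cast; ring⟩

theorem intCast_add_intCast_mul_eta_pow_three (x y : ℤ) :
    ((x : 𝓞 K) + y * η) ^ 3 =
      ((x ^ 3 + y ^ 3 - 3 * x * y ^ 2 : ℤ) : 𝓞 K) + ((3 * x * y * (x - y) : ℤ) : 𝓞 K) * η := by
  have hη : η ^ 2 = -η - 1 := eta_sq hζ
  push_cast
  linear_combination (3 * x * y ^ 2 + y ^ 3 * (η - 1)) * hη

section NumberField

variable [NumberField K]

theorem intCast_add_intCast_mul_eta_eq_zero {x y : ℤ} (h : (x : 𝓞 K) + y * η = 0) :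
    x = 0 ∧ y = 0 := by
  have hη : η ^ 2 + η + 1 = 0 := eta_sq_add_eta_add_one hζ
  -- multiply by the conjugate `x + yη²`: the norm `x² - xy + y²` vanishes
  have : ((x ^ 2 - x * y + y ^ 2 : ℤ) : 𝓞 K) = 0 := by
    push_cast
    linear_combination (x + y * η ^ 2) * h - x * y * hη - y ^ 2 * hζ.toInteger_cube_eq_one
  have hZ : x ^ 2 - x * y + y ^ 2 = 0 := by exact_mod_cast this
  constructor <;> nlinarith [sq_nonneg (x + y), sq_nonneg (x - y)]

theorem exists_eq_intCast_add_intCast_mul_eta [IsCyclotomicExtension {3} ℚ K] (z : 𝓞 K) :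
    ∃ x y : ℤ, z = x + y * η := by
  obtain ⟨g, hgdeg, rfl⟩ := hζ.integralPowerBasis.exists_eq_aeval z
  rw [hζ.integralPowerBasis_dim, Nat.totient_prime Nat.prime_three] at hgdeg
  obtain ⟨p, q, rfl⟩ := Polynomial.exists_eq_X_add_C_of_natDegree_le_one (Nat.le_of_lt_succ hgdeg)
  refine ⟨q, p, ?_⟩
  simp [add_comm]

theorem two_dvd_intCast_add_intCast_mul_eta_iff [IsCyclotomicExtension {3} ℚ K] {x y : ℤ} :
    (2 : 𝓞 K) ∣ x + y * η ↔ Even x ∧ Even y := by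
  constructor
  · rintro ⟨w, hw⟩
    obtain ⟨p, q, rfl⟩ := exists_eq_intCast_add_intCast_mul_eta hζ w
    obtain ⟨hx, hy⟩ := intCast_add_intCast_mul_eta_eq_zero hζ (x := x - 2 * p) (y := y - 2 * q)
      (by push_cast; linear_combination hw)
    exact ⟨⟨p, by omega⟩, ⟨q, by omega⟩⟩
  · rintro ⟨⟨p, rfl⟩, ⟨q, rfl⟩⟩
    exact ⟨p + q * η, by push_cast; ring⟩

theorem two_dvd_cube_or_two_dvd_cube_sub_one [IsCyclotomicExtension {3} ℚ K] (δ : 𝓞 K) :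
    2 ∣ δ ^ 3 ∨ 2 ∣ δ ^ 3 - 1 := by
  have hζ := zeta_spec 3 ℚ K
  obtain ⟨x, y, rfl⟩ := exists_eq_intCast_add_intCast_mul_eta hζ δ
  rw [intCast_add_intCast_mul_eta_pow_three hζ]
  have hY : Even (3 * x * y * (x - y)) := by
    simp only [Int.even_mul, Int.even_sub]
    tauto
  rcases Int.even_or_odd (x ^ 3 + y ^ 3 - 3 * x * y ^ 2) with hX | hX
  · exact .inl ((two_dvd_intCast_add_intCast_mul_eta_iff hζ).2 ⟨hX, hY⟩)
  · refine .inr ?_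
    convert (two_dvd_intCast_add_intCast_mul_eta_iff hζ).2 ⟨hX.sub_odd odd_one, hY⟩ using 1
    push_cast
    ring

theorem eq_one_or_neg_one_of_two_dvd_sub_one [IsCyclotomicExtension {3} ℚ K]
    {u : (𝓞 K)ˣ} (h : (2 : 𝓞 K) ∣ u - 1) : u = 1 ∨ u = -1 := by
  have hζ := zeta_spec 3 ℚ K
  have hη : hζ.toInteger ^ 2 = -hζ.toInteger - 1 := eta_sq hζ
  have not_two_dvd (x y : ℤ) (hy : Odd y) : ¬ (2 : 𝓞 K) ∣ x + y * hζ.toInteger := fun h =>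
    Int.not_even_iff_odd.2 hy ((two_dvd_intCast_add_intCast_mul_eta_iff hζ).1 h).2
  have hu := Units.mem hζ u
  fin_cases hu
  · exact .inl rfl
  · exact .inr rfl
  · refine (not_two_dvd (-1) 1 odd_one ?_).elim
    convert h using 1; push_cast [coe_eta]; ring
  · refine (not_two_dvd (-1) (-1) odd_one.neg ?_).elim
    convert h using 1; push_cast [coe_eta]; ring
  · refine (not_two_dvd (-2) (-1) odd_one.neg ?_).elim
    convert h using 1; push_cast [coe_eta]; linear_combination -hη
  · refine (not_two_dvd 0 1 odd_one ?_).elim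
    convert h using 1; push_cast [coe_eta]; linear_combination hη

theorem exists_cube_eq_of_associated_cube [IsCyclotomicExtension {3} ℚ K]
    {α δ : 𝓞 K} (hδ : Associated (δ ^ 3) α) (hα : 2 ∣ α - 1) : ∃ γ, γ ^ 3 = α := by
  have hζ := zeta_spec 3 ℚ K
  obtain ⟨u, rfl⟩ := hδ
  rcases two_dvd_cube_or_two_dvd_cube_sub_one δ with h | h
  · have h1 : (2 : 𝓞 K) ∣ (1 : ℤ) + (0 : ℤ) * hζ.toInteger := by
      simpa using dvd_sub (h.mul_right u) hα
    exact absurd ((two_dvd_intCast_add_intCast_mul_eta_iff hζ).1 h1).1 Int.not_even_one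
  · have hu : (2 : 𝓞 K) ∣ u - 1 := by
      convert dvd_sub hα (h.mul_right u) using 1
      ring
    rcases eq_one_or_neg_one_of_two_dvd_sub_one hu with rfl | rfl
    · exact ⟨δ, by simp⟩
    · exact ⟨-δ, by simp [Odd.neg_pow (by decide : Odd 3)]⟩

theorem exists_toEisenstein_eq_eta_pow_mul [IsCyclotomicExtension {3} ℚ K] (γ : 𝓞 K) :
    ∃ (k : ℕ) (w : ℤ√(-3)), toEisenstein hζ w = η ^ k * γ := by
  have hη : η ^ 2 = -η - 1 := eta_sq hζ
  obtain ⟨x, y, rfl⟩ := exists_eq_intCast_add_intCast_mul_eta hζ γ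
  by_cases hy : Even y
  · obtain ⟨w, hw⟩ := exists_toEisenstein_eq_of_even hζ x hy
    exact ⟨0, w, by rw [hw, pow_zero, one_mul]⟩
  by_cases hx : Even x
  · obtain ⟨w, hw⟩ := exists_toEisenstein_eq_of_even hζ (y - x) hx.neg
    exact ⟨2, w, by rw [hw]; push_cast; linear_combination (-(x + y * (η - 1))) * hη⟩
  · obtain ⟨w, hw⟩ :=
      exists_toEisenstein_eq_of_even hζ (-y) (y := x - y) (Int.even_sub.2 (by tauto))
    exact ⟨1, w, by rw [hw]; push_cast; linear_combination (-y) * hη⟩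

theorem toEisenstein_injective : Function.Injective (toEisenstein hζ) :=
  Zsqrtd.lift_injective _ fun n => by nlinarith [sq_nonneg n]

theorem exists_cube_eq_of_toEisenstein_eq_cube [IsCyclotomicExtension {3} ℚ K] {z : ℤ√(-3)}
    {γ : 𝓞 K} (h : γ ^ 3 = toEisenstein hζ z) : ∃ w, w ^ 3 = z := by
  obtain ⟨k, w, hw⟩ := exists_toEisenstein_eq_eta_pow_mul hζ γ
  refine ⟨w, toEisenstein_injective hζ ?_⟩
  rw [map_pow, hw, mul_pow, ← pow_mul, mul_comm k, pow_mul, hζ.toInteger_cube_eq_one, one_pow,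
    one_mul, h]

end NumberField

end IsCyclotomicExtension.Rat.Three

open IsCyclotomicExtension.Rat.Three in
theorem stmt_5_general (a b : ℤ) (c : ℕ) (hodd : Odd (a + b)) (hcop : Int.gcd a b = 1)
    (hcube : a ^ 2 + 3 * b ^ 2 = (c : ℤ) ^ 3) :
    ∃ e f : ℤ, (⟨a, b⟩ : Zsqrtd (-3)) = (⟨e, f⟩ : Zsqrtd (-3)) ^ 3 := by
  set z : ℤ√(-3) := ⟨a, b⟩
  have hab : IsCoprime a b := Int.isCoprime_iff_gcd_eq_one.mpr hcop
  have hnorm : z.norm = a ^ 2 + 3 * b ^ 2 := by simp [z, Zsqrtd.norm]; ring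
  have hz : IsCoprime z (star z) := Zsqrtd.isCoprime_self_star hab <| by
    rw [hnorm, show (2 : ℤ) * -3 = -6 by norm_num, IsCoprime.neg_left_iff]
    exact isCoprime_six_of_sq_add_three_mul_sq_eq_cube hab hodd hcube
  let K := CyclotomicField 3 ℚ
  have : IsCyclotomicExtension {3} ℚ K := CyclotomicField.isCyclotomicExtension 3 ℚ
  have : NumberField K := IsCyclotomicExtension.numberField {3} ℚ K
  have := IsCyclotomicExtension.Rat.three_pid K
  have hζ := IsCyclotomicExtension.zeta_spec 3 ℚ K
  obtain ⟨δ, hδ⟩ := exists_associated_pow_of_mul_eq_pow' (hz.map (toEisenstein hζ))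
    (c := ((c : ℤ) : 𝓞 K)) (k := 3)
    (by rw [← map_mul, ← Zsqrtd.norm_eq_mul_conj, hnorm, hcube]; simp)
  obtain ⟨γ, hγ⟩ := exists_cube_eq_of_associated_cube hδ (two_dvd_toEisenstein_sub_one hζ hodd)
  obtain ⟨w, hw⟩ := exists_cube_eq_of_toEisenstein_eq_cube hζ hγ
  exact ⟨w.re, w.im, hw.symm⟩

theorem stmt_5 (a b : ℤ) (c : ℕ) (ha : a ≠ 0) (hb : b ≠ 0) (hc : 0 < c)
    (hodd : Odd (a + b)) (hcop : Int.gcd a b = 1)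
    (hcube : a ^ 2 + 3 * b ^ 2 = (c : ℤ) ^ 3) :
    ∃ e f : ℤ, (⟨a, b⟩ : Zsqrtd (-3)) = (⟨e, f⟩ : Zsqrtd (-3)) ^ 3 :=
  stmt_5_general a b c hodd hcop hcube
end

section
/- If a + b is odd, gcd(a,b) = 1, and a² + 3b² = c³ for some positive integer c, then there exist nonzero integers e, f such that a = e(e² − 9f²) and b = 3f(e² − f²); in particular 3 divides b. -/
/-!
Work in the Eisenstein integers `ℤ[ω]`, a principal ideal domain, where `√-3 = 2ω + 1` and
`a² + 3b² = (a + b√-3)(a - b√-3)`. The norm `a² + 3b²` is odd, and prime to 3 because it is a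
cube and `gcd(a, b) = 1`; hence the two factors are coprime, so `a + b√-3` is a unit times a
cube. The units `±ω, ±ω²` would make `a + b` even, and multiplying the cube root by a suitable
power of `ω` moves it into `ℤ[√-3]`; hence `a + b√-3 = (e + f√-3)³`, and comparing coordinates
gives the formulas for `a` and `b`.
-/

open NumberField

theorem Int.isCoprime_sq_add_three_mul_sq_six_of_eq_cube {a b c : ℤ} (hodd : Odd (a + b))
    (hab : IsCoprime a b) (h : a ^ 2 + 3 * b ^ 2 = c ^ 3) : IsCoprime (a ^ 2 + 3 * b ^ 2) 6 := by
  have h2 : ¬ 2 ∣ a ^ 2 + 3 * b ^ 2 := by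
    have hN : a ^ 2 + 3 * b ^ 2 = (a + b) ^ 2 + 2 * (b * (b - a)) := by ring
    rw [hN, ← even_iff_two_dvd, Int.not_even_iff_odd]
    exact hodd.pow.add_even (even_two_mul _)
  have h3 : ¬ 3 ∣ a ^ 2 + 3 * b ^ 2 := by
    intro h3
    obtain ⟨a', rfl⟩ : 3 ∣ a :=
      Int.prime_three.dvd_of_dvd_pow ((Int.dvd_add_left (dvd_mul_right 3 _)).mp h3)
    obtain ⟨c', rfl⟩ : 3 ∣ c := Int.prime_three.dvd_of_dvd_pow (h ▸ h3)
    have hb : 3 ∣ b := Int.prime_three.dvd_of_dvd_pow (n := 2) ⟨3 * c' ^ 3 - a' ^ 2, by linarith⟩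
    have := hab.isUnit_of_dvd' (dvd_mul_right 3 a') hb
    norm_num [Int.isUnit_iff] at this
  have h6 := ((Int.prime_two.coprime_iff_not_dvd.mpr h2).symm).mul_right
    (Int.prime_three.coprime_iff_not_dvd.mpr h3).symm
  norm_num at h6
  exact h6

namespace IsCyclotomicExtension.Rat.Three

variable {K : Type*} [Field K] {ζ : K} (hζ : IsPrimitiveRoot ζ 3)

local notation "ω" => hζ.toInteger

lemma toInteger_sq_add_toInteger_add_one : ω ^ 2 + ω + 1 = 0 :=
  eta_sq_add_eta_add_one hζ

lemma two_mul_toInteger_add_one_sq : (2 * ω + 1) ^ 2 = -3 := by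
  linear_combination 4 * toInteger_sq_add_toInteger_add_one hζ

lemma int_add_int_mul_mul_sub (a b : ℤ) :
    ((a : 𝓞 K) + b * (2 * ω + 1)) * (a - b * (2 * ω + 1)) = ((a ^ 2 + 3 * b ^ 2 : ℤ) : 𝓞 K) := by
  push_cast
  linear_combination (-(b : 𝓞 K) ^ 2) * two_mul_toInteger_add_one_sq hζ

lemma int_add_int_mul_cube (e f : ℤ) :
    ((e : 𝓞 K) + f * (2 * ω + 1)) ^ 3 =
      ((e * (e ^ 2 - 9 * f ^ 2) : ℤ) : 𝓞 K) +
        ((3 * f * (e ^ 2 - f ^ 2) : ℤ) : 𝓞 K) * (2 * ω + 1) := by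
  push_cast
  linear_combination (3 * e * f ^ 2 + f ^ 3 * (2 * ω + 1) : 𝓞 K) * two_mul_toInteger_add_one_sq hζ

lemma isCoprime_int_add_int_mul_sub {a b : ℤ} (hab : IsCoprime a b)
    (h6 : IsCoprime (a ^ 2 + 3 * b ^ 2) 6) :
    IsCoprime ((a : 𝓞 K) + b * (2 * ω + 1)) (a - b * (2 * ω + 1)) := by
  set s := 2 * ω + 1
  have h6' : IsCoprime ((a : 𝓞 K) + b * s) 6 := by
    refine IsCoprime.of_mul_left_left (y := a - b * s) ?_
    rw [int_add_int_mul_mul_sub]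
    simpa only [eq_intCast, Int.cast_ofNat] using h6.map (Int.castRingHom (𝓞 K))
  obtain ⟨p, q, hpq⟩ := hab
  -- With `A = a + b s`, `A' = a - b s`: `A + A' = 2a` and `s (A - A') = -6b`,
  -- so `6 = 3p (A + A') - q s (A - A')`.
  have hsix : (6 : 𝓞 K) = (a - b * s) * (3 * p + q * s) + (a + b * s) * (3 * p - q * s) := by
    have hpq' : (p : 𝓞 K) * a + q * b = 1 := by exact_mod_cast congrArg (Int.cast (R := 𝓞 K)) hpq
    linear_combination (-6 : 𝓞 K) * hpq' + 2 * (b * q : 𝓞 K) * two_mul_toInteger_add_one_sq hζ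
  rw [hsix] at h6'
  exact h6'.of_add_mul_left_right.of_mul_right_left

variable [NumberField K]

lemma int_add_int_mul_toInteger_inj {x y x' y' : ℤ}
    (h : (x : 𝓞 K) + y * ω = x' + y' * ω) : x = x' ∧ y = y' := by
  -- `N(x + y ω) = x² - x y + y²` vanishes for the difference.
  have hnorm : (((x - x') ^ 2 - (x - x') * (y - y') + (y - y') ^ 2 : ℤ) : 𝓞 K) = 0 := by
    push_cast
    linear_combination (x - x' - (y - y') * ω - (y - y') : 𝓞 K) * h
      + (y - y' : 𝓞 K) ^ 2 * toInteger_sq_add_toInteger_add_one hζ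
  have hnorm' : (x - x') ^ 2 - (x - x') * (y - y') + (y - y') ^ 2 = 0 := by exact_mod_cast hnorm
  constructor <;> nlinarith [sq_nonneg (x - x' - (y - y')), sq_nonneg (x - x'), sq_nonneg (y - y')]

lemma int_add_int_mul_two_mul_toInteger_add_one_inj {a b a' b' : ℤ}
    (h : (a : 𝓞 K) + b * (2 * ω + 1) = a' + b' * (2 * ω + 1)) : a = a' ∧ b = b' := by
  have := int_add_int_mul_toInteger_inj hζ (x := a + b) (y := 2 * b) (x' := a' + b') (y' := 2 * b')
    (by push_cast; linear_combination h)
  omega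

variable [IsCyclotomicExtension {3} ℚ K]

lemma exists_int_add_int_mul_toInteger_eq (β : 𝓞 K) : ∃ x y : ℤ, (x : 𝓞 K) + y * ω = β := by
  have hβ : β ∈ Algebra.adjoin ℤ {ω} := by
    rw [IsCyclotomicExtension.Rat.adjoin_singleton_eq_top hζ]; trivial
  induction hβ using Algebra.adjoin_induction with
  | mem x hx => exact ⟨0, 1, by simp_all⟩
  | algebraMap n => exact ⟨n, 0, by simp⟩
  | add _ _ _ _ h h' =>
    obtain ⟨x, y, rfl⟩ := h; obtain ⟨x', y', rfl⟩ := h'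
    exact ⟨x + x', y + y', by push_cast; ring⟩
  | mul _ _ _ _ h h' =>
    obtain ⟨x, y, rfl⟩ := h; obtain ⟨x', y', rfl⟩ := h'
    refine ⟨x * x' - y * y', x * y' + y * x' - y * y', ?_⟩
    push_cast
    linear_combination (-(y : 𝓞 K) * y') * toInteger_sq_add_toInteger_add_one hζ

lemma coe_unit_eq (u : (𝓞 K)ˣ) :
    (u : 𝓞 K) = 1 ∨ (u : 𝓞 K) = -1 ∨ (u : 𝓞 K) = ω ∨ (u : 𝓞 K) = -ω ∨
      (u : 𝓞 K) = ω ^ 2 ∨ (u : 𝓞 K) = -ω ^ 2 := by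
  have := Units.mem hζ u
  simp only [List.mem_cons, List.not_mem_nil, or_false] at this
  rcases this with rfl | rfl | rfl | rfl | rfl | rfl <;> simp

lemma exists_cube_eq_cube_int_add_int_mul (β : 𝓞 K) :
    ∃ e f : ℤ, β ^ 3 = ((e : 𝓞 K) + f * (2 * ω + 1)) ^ 3 := by
  have hω := toInteger_sq_add_toInteger_add_one hζ
  have hcube (k : ℕ) : (ω ^ k * β) ^ 3 = β ^ 3 := by
    rw [mul_pow, ← pow_mul, mul_comm k, pow_mul, hζ.toInteger_cube_eq_one, one_pow, one_mul]
  obtain ⟨x, y, rfl⟩ := exists_int_add_int_mul_toInteger_eq hζ β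
  -- One of `β`, `ω β = -y + (x - y) ω`, `ω² β = (y - x) - x ω` has an even `ω`-coordinate.
  rcases Int.even_or_odd y with ⟨f, rfl⟩ | hy
  · exact ⟨x - f, f, by push_cast; ring⟩
  rcases Int.even_or_odd x with ⟨g, rfl⟩ | hx
  · refine ⟨y - g, -g, ?_⟩
    rw [← hcube 2]
    congr 1
    push_cast
    linear_combination (2 * g + y * (ω - 1) : 𝓞 K) * hω
  · obtain ⟨f, hf⟩ := hx.sub_odd hy
    obtain rfl : x = y + f + f := by omega
    refine ⟨-y - f, f, ?_⟩
    rw [← hcube 1]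
    congr 1
    push_cast
    linear_combination (y : 𝓞 K) * hω

lemma exists_eq_cube_of_associated {a b : ℤ} (hodd : Odd (a + b)) {β : 𝓞 K}
    (h : Associated (β ^ 3) ((a : 𝓞 K) + b * (2 * ω + 1))) :
    ∃ e f : ℤ, (a : 𝓞 K) + b * (2 * ω + 1) = ((e : 𝓞 K) + f * (2 * ω + 1)) ^ 3 := by
  have hω := toInteger_sq_add_toInteger_add_one hζ
  obtain ⟨u, hu⟩ := h
  obtain ⟨e, f, hβ⟩ := exists_cube_eq_cube_int_add_int_mul hζ β
  obtain ⟨m, n, hmn⟩ : ∃ m n : ℤ, ((e : 𝓞 K) + f * (2 * ω + 1)) ^ 3 = m + n * (2 * ω + 1) :=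
    ⟨_, _, int_add_int_mul_cube hζ e f⟩
  rw [hβ] at hu
  obtain ⟨k, hk⟩ := hodd
  rcases coe_unit_eq hζ u with hu1 | hu1 | hu1 | hu1 | hu1 | hu1 <;> rw [hu1] at hu
  · exact ⟨e, f, by rw [← hu, mul_one]⟩
  · exact ⟨-e, -f, by rw [← hu]; push_cast; ring⟩
  · rw [hmn] at hu
    have := int_add_int_mul_toInteger_inj hζ (x := a + b) (y := 2 * b) (x' := -2 * n) (y' := m - n)
      (by push_cast; linear_combination -hu + 2 * n * hω)
    omega
  · rw [hmn] at hu
    have := int_add_int_mul_toInteger_inj hζ (x := a + b) (y := 2 * b) (x' := 2 * n) (y' := n - m)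
      (by push_cast; linear_combination -hu - 2 * n * hω)
    omega
  · rw [hmn] at hu
    have := int_add_int_mul_toInteger_inj hζ (x := a + b) (y := 2 * b) (x' := n - m) (y' := -m - n)
      (by push_cast; linear_combination -hu + (m + n * (2 * ω - 1)) * hω)
    omega
  · rw [hmn] at hu
    have := int_add_int_mul_toInteger_inj hζ (x := a + b) (y := 2 * b) (x' := m - n) (y' := m + n)
      (by push_cast; linear_combination -hu - (m + n * (2 * ω - 1)) * hω)
    omega

lemma exists_int_add_int_mul_cube_eq {a b c : ℤ} (hodd : Odd (a + b)) (hab : IsCoprime a b)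
    (h : a ^ 2 + 3 * b ^ 2 = c ^ 3) :
    ∃ e f : ℤ, (a : 𝓞 K) + b * (2 * ω + 1) = ((e : 𝓞 K) + f * (2 * ω + 1)) ^ 3 := by
  have := three_pid K
  have hprod : ((a : 𝓞 K) + b * (2 * ω + 1)) * (a - b * (2 * ω + 1)) = (c : 𝓞 K) ^ 3 := by
    rw [int_add_int_mul_mul_sub, h, Int.cast_pow]
  have hcop := isCoprime_int_add_int_mul_sub hζ hab
    (Int.isCoprime_sq_add_three_mul_sq_six_of_eq_cube hodd hab h)
  obtain ⟨β, hβ⟩ := exists_associated_pow_of_mul_eq_pow' hcop hprod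
  exact exists_eq_cube_of_associated hζ hodd hβ

end IsCyclotomicExtension.Rat.Three

open IsCyclotomicExtension.Rat.Three in
theorem stmt_6_general (a b : ℤ) (c : ℕ) (ha : a ≠ 0) (hb : b ≠ 0)
    (hodd : Odd (a + b)) (hcop : Int.gcd a b = 1)
    (hcube : a ^ 2 + 3 * b ^ 2 = (c : ℤ) ^ 3) :
    (∃ e f : ℤ, e ≠ 0 ∧ f ≠ 0 ∧ a = e * (e ^ 2 - 9 * f ^ 2) ∧
      b = 3 * f * (e ^ 2 - f ^ 2)) ∧ (3 : ℤ) ∣ b := by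
  have : IsCyclotomicExtension {3} ℚ (CyclotomicField 3 ℚ) :=
    CyclotomicField.isCyclotomicExtension 3 ℚ
  have hζ := IsCyclotomicExtension.zeta_spec 3 ℚ (CyclotomicField 3 ℚ)
  obtain ⟨e, f, hA⟩ :=
    exists_int_add_int_mul_cube_eq hζ hodd (Int.isCoprime_iff_gcd_eq_one.mpr hcop) hcube
  rw [int_add_int_mul_cube] at hA
  obtain ⟨rfl, rfl⟩ := int_add_int_mul_two_mul_toInteger_add_one_inj hζ hA
  refine ⟨⟨e, f, ?_, ?_, rfl, rfl⟩, dvd_mul_of_dvd_left (dvd_mul_right 3 f) _⟩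
  · rintro rfl
    simp at ha
  · rintro rfl
    simp at hb

theorem stmt_6 (a b : ℤ) (c : ℕ) (ha : a ≠ 0) (hb : b ≠ 0) (hc : 0 < c)
    (hodd : Odd (a + b)) (hcop : Int.gcd a b = 1)
    (hcube : a ^ 2 + 3 * b ^ 2 = (c : ℤ) ^ 3) :
    (∃ e f : ℤ, e ≠ 0 ∧ f ≠ 0 ∧ a = e * (e ^ 2 - 9 * f ^ 2) ∧
      b = 3 * f * (e ^ 2 - f ^ 2)) ∧ (3 : ℤ) ∣ b :=
  stmt_6_general a b c ha hb hodd hcop hcube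
end

section
/- There are no nonzero integers p, q, θ with p + q odd and gcd(p,q) = 1 such that 2p(p² + 3q²) = θ³. -/
/-! The left-hand side is `(p + q)³ + (p - q)³`, and both summands are nonzero when `p + q` is
odd, so a solution would contradict Fermat's Last Theorem for exponent 3. -/

lemma add_pow_three_add_sub_pow_three {R : Type*} [CommRing R] (p q : R) :
    (p + q) ^ 3 + (p - q) ^ 3 = 2 * p * (p ^ 2 + 3 * q ^ 2) := by
  ring

lemma two_mul_mul_sq_add_three_mul_sq_ne_pow_three {p q θ : ℤ} (hadd : p + q ≠ 0) (hsub : p ≠ q)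
    (hθ : θ ≠ 0) : 2 * p * (p ^ 2 + 3 * q ^ 2) ≠ θ ^ 3 := by
  rw [← add_pow_three_add_sub_pow_three]
  exact fermatLastTheoremFor_iff_int.mp fermatLastTheoremThree _ _ _ hadd (sub_ne_zero.mpr hsub) hθ

theorem stmt_8 : ¬ ∃ p q θ : ℤ, p ≠ 0 ∧ q ≠ 0 ∧ θ ≠ 0 ∧ Odd (p + q) ∧
    Int.gcd p q = 1 ∧ 2 * p * (p ^ 2 + 3 * q ^ 2) = θ ^ 3 := by
  rintro ⟨p, q, θ, -, -, hθ, hodd, -, h⟩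
  have hadd : p + q ≠ 0 := fun h0 ↦ Int.not_odd_zero (h0 ▸ hodd)
  exact two_mul_mul_sq_add_three_mul_sq_ne_pow_three hadd (Int.ne_of_odd_add hodd) hθ h
end

section
/- For any integers p, q with p ≠ 0 and q ≠ p², the number 12q³ − 3p⁶ is not a perfect square in ℤ. -/
/-! With `x = 3p³ + r`, `y = 3p³ - r`, `z = 6pq`, the hypothesis `r² = 12q³ - 3p⁶` is exactly the
identity `x³ + y³ = z³`. By Fermat's Last Theorem for exponent 3 one of `x, y, z` vanishes:
`x = 0` or `y = 0` forces `q³ = p⁶`, i.e. `q = p²`, while `z = 0` forces `q = 0` and then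
`r² = -3p⁶ < 0`. -/

theorem Int.mul_mul_eq_zero_of_add_cube_eq_cube {x y z : ℤ} (h : x ^ 3 + y ^ 3 = z ^ 3) :
    x * y * z = 0 := by
  by_contra hxyz
  obtain ⟨⟨hx, hy⟩, hz⟩ := mul_ne_zero_iff.1 hxyz |>.imp_left mul_ne_zero_iff.1
  exact fermatLastTheoremFor_iff_int.1 fermatLastTheoremThree x y z hx hy hz h

theorem add_cube_eq_cube_of_sq_eq {R : Type*} [CommRing R] {p q r : R}
    (h : 12 * q ^ 3 - 3 * p ^ 6 = r ^ 2) :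
    (3 * p ^ 3 + r) ^ 3 + (3 * p ^ 3 - r) ^ 3 = (6 * p * q) ^ 3 := by
  linear_combination -18 * p ^ 3 * h

theorem Int.eq_sq_of_twelve_mul_cube_sub_eq {p q : ℤ}
    (h : 12 * q ^ 3 - 3 * p ^ 6 = (3 * p ^ 3) ^ 2) : q = p ^ 2 := by
  have hcube : q ^ 3 = (p ^ 2) ^ 3 := by linarith
  exact (Odd.pow_inj (by decide)).1 hcube

theorem stmt_11 (p q : ℤ) (hp : p ≠ 0) (hq : q ≠ p ^ 2) :
    ¬ ∃ r : ℤ, 12 * q ^ 3 - 3 * p ^ 6 = r ^ 2 := by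
  rintro ⟨r, hr⟩
  rcases mul_eq_zero.1 (Int.mul_mul_eq_zero_of_add_cube_eq_cube (add_cube_eq_cube_of_sq_eq hr))
    with hxy | hz
  · refine hq (Int.eq_sq_of_twelve_mul_cube_sub_eq (hr.trans ?_))
    rcases mul_eq_zero.1 hxy with hx | hy
    · linear_combination (r - 3 * p ^ 3) * hx
    · linear_combination (-r - 3 * p ^ 3) * hy
  · have hq0 : q = 0 := by simpa [hp] using hz
    subst hq0
    nlinarith [sq_nonneg r, pow_pos (pow_two_pos_of_ne_zero hp) 3]
end

section
/- The Diophantine equation 9x³ = zy³ + z² + 6xyz has no solution with x, y, z all nonzero integers. -/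
/-!
Completing the square in `z` with `v = 2z + y³ + 6xy` and `w = 3x + y²` turns the equation into
`3v² + y⁶ = 4w³`. Then `(y³ + v)³ + (y³ - v)³ = 2y³(y⁶ + 3v²) = (2yw)³`, so Fermat's Last Theorem
for exponent 3 forces `v = ±y³`; hence `w³ = y⁶`, i.e. `w = y²`, which means `x = 0`.
-/

theorem Int.eq_sq_of_three_mul_sq_add_pow_six_eq {y v w : ℤ} (hy : y ≠ 0)
    (h : 3 * v ^ 2 + y ^ 6 = 4 * w ^ 3) : w = y ^ 2 := by
  have hw : w ≠ 0 := by
    rintro rfl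
    have : 0 < 3 * v ^ 2 + y ^ 6 := by positivity
    linarith
  have hv : v ^ 2 = (y ^ 3) ^ 2 := by
    by_contra hne
    rw [sq_eq_sq_iff_eq_or_eq_neg, not_or] at hne
    refine fermatLastTheoremFor_iff_int.mp fermatLastTheoremThree (y ^ 3 + v) (y ^ 3 - v)
      (2 * y * w) ?_ ?_ (by positivity) (by linear_combination 2 * y ^ 3 * h)
    · exact fun h0 ↦ hne.2 (by linear_combination h0)
    · exact fun h0 ↦ hne.1 (by linear_combination -h0)
  have hcube : w ^ 3 = (y ^ 2) ^ 3 := by linarith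
  exact (Odd.pow_inj (by decide)).mp hcube

theorem stmt_12 : ¬ ∃ x y z : ℤ, x ≠ 0 ∧ y ≠ 0 ∧ z ≠ 0 ∧
    9 * x ^ 3 = z * y ^ 3 + z ^ 2 + 6 * x * y * z := by
  rintro ⟨x, y, z, hx, hy, -, h⟩
  have hw : 3 * x + y ^ 2 = y ^ 2 :=
    Int.eq_sq_of_three_mul_sq_add_pow_six_eq (v := 2 * z + y ^ 3 + 6 * x * y) hy
      (by linear_combination -12 * h)
  exact hx (by linarith)
end

section
/- There are no nonzero integers a, b, c satisfying (a + b + c)³ = 24abc (equivalently, ((a+b+c)/2)³ = 3abc). -/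
/-!
With `p = -a + b + c`, `q = a - b + c`, `r = a + b - c` one has
`p³ + q³ + r³ = (a + b + c)³ - 24abc`, so a solution gives `p³ + q³ + r³ = 0`.
By Fermat's Last Theorem for exponent 3 one of `p, q, r` vanishes and the other two are
opposite, i.e. one of `p + q = 2c`, `q + r = 2a`, `r + p = 2b` is zero.
-/

lemma cube_add_cube_add_cube_eq {R : Type*} [CommRing R] (a b c : R) :
    (-a + b + c) ^ 3 + (a - b + c) ^ 3 + (a + b - c) ^ 3 = (a + b + c) ^ 3 - 24 * (a * b * c) := by
  ring

lemma Int.add_cube_eq_zero_iff {y z : ℤ} : y ^ 3 + z ^ 3 = 0 ↔ y + z = 0 := by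
  rw [add_eq_zero_iff_eq_neg, add_eq_zero_iff_eq_neg, ← Odd.neg_pow (by decide),
    Odd.pow_inj (by decide)]

lemma Int.add_mul_add_mul_add_eq_zero_of_cube_sum_eq_zero {x y z : ℤ}
    (h : x ^ 3 + y ^ 3 + z ^ 3 = 0) : (x + y) * (y + z) * (z + x) = 0 := by
  have flt : FermatLastTheoremWith ℤ 3 := fermatLastTheoremFor_iff_int.mp fermatLastTheoremThree
  have hxyz : x = 0 ∨ y = 0 ∨ z = 0 := by
    by_contra! hne
    exact flt x y (-z) hne.1 hne.2.1 (neg_ne_zero.2 hne.2.2) (by linear_combination h)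
  rcases hxyz with rfl | rfl | rfl
  · simp [Int.add_cube_eq_zero_iff.1 (by linear_combination h : y ^ 3 + z ^ 3 = 0)]
  · simp [Int.add_cube_eq_zero_iff.1 (by linear_combination h : z ^ 3 + x ^ 3 = 0)]
  · simp [Int.add_cube_eq_zero_iff.1 (by linear_combination h : x ^ 3 + y ^ 3 = 0)]

theorem stmt_13 : ¬ ∃ a b c : ℤ, a ≠ 0 ∧ b ≠ 0 ∧ c ≠ 0 ∧
    (a + b + c) ^ 3 = 24 * (a * b * c) := by
  rintro ⟨a, b, c, ha, hb, hc, h⟩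
  have hsum := Int.add_mul_add_mul_add_eq_zero_of_cube_sum_eq_zero
    ((cube_add_cube_add_cube_eq a b c).trans (sub_eq_zero.2 h))
  have h8 : 8 * (a * b * c) = 0 := by linear_combination hsum
  simp [ha, hb, hc] at h8
end

section
/- Every prime p of the form 6k+1 has a representation p = r² + 3s² with r, s positive integers, and this representation is unique. -/
/-!
Since `3 ∣ p - 1`, Cauchy's theorem gives an element `ω` of order 3 in `𝔽_p^×`, and
`(2ω + 1)² = -3`. With `a² = -3` in `𝔽_p`, Thue's pigeonhole argument yields integers
`|x|, |y| < √p`, not both zero, with `x ≡ a y`; then `x² + 3y² = m p` with `m ∈ {1, 2, 3}`.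
The case `m = 2` is impossible modulo 4, and for `m = 3` we have `x = 3z` and `p = y² + 3z²`.
For uniqueness, two representations `a² + 3b² = c² + 3e² = p` give `p ∣ (ae - bc)(ae + bc)`,
while `p² = (ac ± 3be)² + 3(ae ∓ bc)²` shows that a factor divisible by `p` must vanish.
-/

theorem FiniteField.isSquare_neg_three {F : Type*} [Field F] [Fintype F]
    (hF : Fintype.card F % 3 = 1) : IsSquare (-3 : F) := by
  classical
  obtain ⟨u, hu⟩ := exists_prime_orderOf_dvd_card 3 (G := Fˣ)
    (by rw [Fintype.card_units]; omega)
  have hu3 : (u : F) ^ 3 = 1 := by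
    rw [← Units.val_pow_eq_pow_val, ← hu, pow_orderOf_eq_one, Units.val_one]
  have hu1 : (u : F) ≠ 1 := fun h ↦ by
    simp [Units.val_eq_one.mp h] at hu
  have hfactor : ((u : F) - 1) * ((u : F) ^ 2 + u + 1) = 0 := by linear_combination hu3
  have hcyc : (u : F) ^ 2 + u + 1 = 0 :=
    (mul_eq_zero.mp hfactor).resolve_left (sub_ne_zero.mpr hu1)
  exact ⟨2 * u + 1, by linear_combination -4 * hcyc⟩

theorem ZMod.exists_intCast_eq_mul_of_lt_sq {n : ℕ} [NeZero n] (a : ZMod n) {k : ℕ}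
    (hk : n < (k + 1) ^ 2) :
    ∃ x y : ℤ, (x ≠ 0 ∨ y ≠ 0) ∧ |x| ≤ k ∧ |y| ≤ k ∧ (x : ZMod n) = a * y := by
  obtain ⟨⟨i₁, j₁⟩, ⟨i₂, j₂⟩, hne, heq⟩ := Fintype.exists_ne_map_eq_of_card_lt
    (fun q : Fin (k + 1) × Fin (k + 1) ↦ ((q.1 : ℕ) : ZMod n) + a * ((q.2 : ℕ) : ZMod n))
    (by simpa [ZMod.card, sq] using hk)
  refine ⟨(i₁ : ℕ) - (i₂ : ℕ), (j₂ : ℕ) - (j₁ : ℕ), ?_, ?_, ?_, ?_⟩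
  · contrapose! hne
    simp only [Prod.mk.injEq, Fin.ext_iff]
    omega
  · rw [abs_le]; omega
  · rw [abs_le]; omega
  · push_cast
    linear_combination heq

theorem Int.sq_add_three_mul_sq_ne_two_mul {q : ℤ} (hq : Odd q) (x y : ℤ) :
    x ^ 2 + 3 * y ^ 2 ≠ 2 * q := by
  obtain ⟨k, rfl⟩ := hq
  intro h
  have h4 := congrArg (Int.cast : ℤ → ZMod 4) h
  push_cast at h4
  revert h4
  generalize (x : ZMod 4) = X
  generalize (y : ZMod 4) = Y
  generalize (k : ZMod 4) = K
  revert X Y K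
  decide

theorem Int.exists_sq_add_three_mul_sq {p : ℕ} (hp : p.Prime) (hp2 : p ≠ 2)
    (h : IsSquare (-3 : ZMod p)) : ∃ x y : ℤ, (p : ℤ) = x ^ 2 + 3 * y ^ 2 := by
  have := Fact.mk hp
  obtain ⟨a, ha⟩ := h
  set k := Nat.sqrt p
  have hkp : k ^ 2 < p :=
    lt_of_le_of_ne (Nat.sqrt_le' p) fun h ↦ hp.not_isSquare ⟨k, by rw [← h, sq]⟩
  obtain ⟨x, y, hxy, hx, hy, hcong⟩ :=
    ZMod.exists_intCast_eq_mul_of_lt_sq a (Nat.lt_succ_sqrt' p)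
  have hdvd : (p : ℤ) ∣ x ^ 2 + 3 * y ^ 2 := by
    rw [← ZMod.intCast_zmod_eq_zero_iff_dvd]
    push_cast
    linear_combination ((x : ZMod p) + a * y) * hcong - (y : ZMod p) ^ 2 * ha
  obtain ⟨m, hm⟩ := hdvd
  have hkp' : (k : ℤ) ^ 2 < p := by exact_mod_cast hkp
  have hx2 : x ^ 2 ≤ (k : ℤ) ^ 2 := sq_le_sq' (abs_le.mp hx).1 (abs_le.mp hx).2
  have hy2 : y ^ 2 ≤ (k : ℤ) ^ 2 := sq_le_sq' (abs_le.mp hy).1 (abs_le.mp hy).2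
  have hpos : 0 < x ^ 2 + 3 * y ^ 2 := by rcases hxy with h | h <;> positivity
  have hm0 : 0 < m := by nlinarith
  have hm4 : m < 4 := by nlinarith
  interval_cases m
  · exact ⟨x, y, by linarith⟩
  · exact absurd (by linarith)
      (Int.sq_add_three_mul_sq_ne_two_mul (hp.odd_of_ne_two hp2).natCast x y)
  · obtain ⟨z, rfl⟩ : 3 ∣ x :=
      Int.prime_three.dvd_of_dvd_pow (n := 2) ⟨p - y ^ 2, by linarith⟩
    exact ⟨y, z, by linarith⟩

theorem Int.sq_eq_sq_of_sq_add_three_mul_sq_eq {p a b c e : ℤ} (hp : Prime p)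
    (h₁ : p = a ^ 2 + 3 * b ^ 2) (h₂ : p = c ^ 2 + 3 * e ^ 2) :
    a ^ 2 = c ^ 2 ∧ b ^ 2 = e ^ 2 := by
  have hp0 : 0 < p := lt_of_le_of_ne (by rw [h₁]; positivity) hp.ne_zero.symm
  have hvanish : ∀ e', p = c ^ 2 + 3 * e' ^ 2 → p ∣ a * e' - b * c → a * e' = b * c := by
    intro e' h₂' hdvd
    have hid : p ^ 2 = (a * c + 3 * b * e') ^ 2 + 3 * (a * e' - b * c) ^ 2 := by
      linear_combination p * h₂' + (c ^ 2 + 3 * e' ^ 2) * h₁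
    have hlt : (a * e' - b * c) ^ 2 < p ^ 2 := by nlinarith [sq_nonneg (a * c + 3 * b * e')]
    exact sub_eq_zero.mp
      (Int.eq_zero_of_dvd_of_natAbs_lt_natAbs hdvd (Int.natAbs_lt_iff_sq_lt.mpr hlt))
  have hprod : p ∣ (a * e - b * c) * (a * e + b * c) :=
    ⟨e ^ 2 - b ^ 2, by linear_combination b ^ 2 * h₂ - e ^ 2 * h₁⟩
  have hsq : a ^ 2 * e ^ 2 = b ^ 2 * c ^ 2 := by
    rcases hp.dvd_or_dvd hprod with h | h
    · linear_combination (a * e + b * c) * hvanish e h₂ h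
    · have h' : p ∣ a * -e - b * c := by
        rw [show a * -e - b * c = -(a * e + b * c) by ring]
        exact dvd_neg.mpr h
      linear_combination (b * c - a * e) * hvanish (-e) (by rw [h₂]; ring) h'
  have hb : b ^ 2 = e ^ 2 :=
    mul_left_cancel₀ hp.ne_zero (by linear_combination b ^ 2 * h₂ - e ^ 2 * h₁ - hsq)
  exact ⟨by linear_combination -h₁ + h₂ - 3 * hb, hb⟩

theorem Nat.Prime.pos_of_eq_sq_add_three_mul_sq {p r s : ℕ} (hp : p.Prime) (hp3 : p ≠ 3)
    (h : p = r ^ 2 + 3 * s ^ 2) : 0 < r ∧ 0 < s := by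
  refine ⟨Nat.pos_of_ne_zero fun hr ↦ hp3 ?_, Nat.pos_of_ne_zero fun hs ↦ ?_⟩
  · subst hr
    exact ((Nat.prime_dvd_prime_iff_eq Nat.prime_three hp).mp ⟨_, by simpa using h⟩).symm
  · subst hs
    exact hp.prime.not_isSquare ⟨r, by simpa [sq] using h⟩

theorem stmt_18 (p : ℕ) (hp : p.Prime) (h1 : p % 6 = 1) :
    ∃! rs : ℕ × ℕ, 0 < rs.1 ∧ 0 < rs.2 ∧ p = rs.1 ^ 2 + 3 * rs.2 ^ 2 := by
  have := Fact.mk hp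
  obtain ⟨x, y, hxy⟩ := Int.exists_sq_add_three_mul_sq hp (by omega)
    (FiniteField.isSquare_neg_three (by rw [ZMod.card]; omega))
  obtain ⟨r, s, hrs⟩ : ∃ r s : ℕ, p = r ^ 2 + 3 * s ^ 2 :=
    ⟨x.natAbs, y.natAbs, by zify; simpa only [Int.natCast_natAbs, sq_abs] using hxy⟩
  obtain ⟨hr, hs⟩ := hp.pos_of_eq_sq_add_three_mul_sq (by omega) hrs
  refine ⟨(r, s), ⟨hr, hs, hrs⟩, ?_⟩
  rintro ⟨u, v⟩ ⟨-, -, huv : p = u ^ 2 + 3 * v ^ 2⟩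
  obtain ⟨hu, hv⟩ := Int.sq_eq_sq_of_sq_add_three_mul_sq_eq (Nat.prime_iff_prime_int.mp hp)
    (a := u) (b := v) (c := r) (e := s) (by exact_mod_cast huv) (by exact_mod_cast hrs)
  exact Prod.ext (Nat.pow_left_injective two_ne_zero (by exact_mod_cast hu : u ^ 2 = r ^ 2))
    (Nat.pow_left_injective two_ne_zero (by exact_mod_cast hv : v ^ 2 = s ^ 2))
end
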